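/- Let a > 0 and τ > 0. On a probability space (Ω, P), let X(0) be a real random variable, and for each n ∈ ℕ let Ŷ_n be a real random variable such that for every ε > 0, P(|e^{a n τ} X(0) − Ŷ_n| > ε) → 0 as n → ∞. For t ≥ 0 define the estimate X̂(t) := e^{a(t − ⌊t/τ⌋·τ)} Ŷ_{⌊t/τ⌋}. Then for every ε > 0, P(|e^{a t} X(0) − X̂(t)| > ε) → 0 as t → ∞ (limit along real t). -/

import Mathlib

open MeasureTheory Filter

/-!
On `[nτ, (n+1)τ)` the error `e^{at} X(0) - X̂(t)` is the error at the update time `nτ`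
propagated by the open-loop flow for a time at most `τ`, so its size is at most `e^{|a|τ}`
times the error at `nτ`. Hence the event that the error at time `t` exceeds `ε` lies in the
event that the error at the update time `⌊t/τ⌋τ` exceeds `ε e^{-|a|τ}`, whose probability
tends to `0` because `⌊t/τ⌋ → ∞`.
-/

theorem tendsto_measure_lt_norm_of_norm_le_mul {Ω ι E F : Type*} [MeasurableSpace Ω]
    [SeminormedAddCommGroup E] [SeminormedAddCommGroup F] {μ : Measure Ω} {l : Filter ι}
    {f : ℕ → Ω → E} {g : ι → Ω → F} {N : ι → ℕ} {C : ℝ} (hC : 0 < C)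
    (hf : ∀ ε > 0, Tendsto (fun n => μ {ω | ε < ‖f n ω‖}) atTop (nhds 0))
    (hN : Tendsto N l atTop) (hgf : ∀ᶠ i in l, ∀ ω, ‖g i ω‖ ≤ C * ‖f (N i) ω‖) :
    ∀ ε > 0, Tendsto (fun i => μ {ω | ε < ‖g i ω‖}) l (nhds 0) := by
  intro ε hε
  refine tendsto_of_tendsto_of_tendsto_of_le_of_le' tendsto_const_nhds
    ((hf (ε / C) (div_pos hε hC)).comp hN) (Eventually.of_forall fun _ => zero_le) ?_
  filter_upwards [hgf] with i hi
  refine measure_mono fun ω (hω : ε < ‖g i ω‖) => ?_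
  show ε / C < ‖f (N i) ω‖
  rw [div_lt_iff₀' hC]
  exact hω.trans_le (hi ω)

theorem abs_exp_mul_sub_exp_mul_le {a τ t m : ℝ} (x y : ℝ) (hm : m ≤ t) (ht : t ≤ m + τ) :
    |Real.exp (a * t) * x - Real.exp (a * (t - m)) * y| ≤
      Real.exp (|a| * τ) * |Real.exp (a * m) * x - y| := by
  have hsplit : Real.exp (a * t) * x - Real.exp (a * (t - m)) * y =
      Real.exp (a * (t - m)) * (Real.exp (a * m) * x - y) := by
    rw [show a * t = a * (t - m) + a * m by ring, Real.exp_add]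
    ring
  rw [hsplit, abs_mul, Real.abs_exp]
  refine mul_le_mul_of_nonneg_right (Real.exp_le_exp.mpr ?_) (abs_nonneg _)
  calc a * (t - m) ≤ |a| * (t - m) := by gcongr; exact le_abs_self a
    _ ≤ |a| * τ := by gcongr; linarith

theorem natFloor_div_mul_le_and_lt_add {t τ : ℝ} (ht : 0 ≤ t) (hτ : 0 < τ) :
    (⌊t / τ⌋₊ : ℝ) * τ ≤ t ∧ t < (⌊t / τ⌋₊ : ℝ) * τ + τ := by
  constructor
  · exact (le_div_iff₀ hτ).mp (Nat.floor_le (div_nonneg ht hτ.le))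
  · have := (div_lt_iff₀ hτ).mp (Nat.lt_floor_add_one (t / τ))
    linarith

theorem estimation_along_sequence_implies_all_times_general
    {Ω : Type*} [MeasurableSpace Ω] (P : Measure Ω)
    (a τ : ℝ) (hτ : 0 < τ)
    (X0 : Ω → ℝ) (Yhat : ℕ → Ω → ℝ)
    (hconv : ∀ ε > 0, Tendsto
      (fun n : ℕ => P {ω | ε < |Real.exp (a * (n * τ)) * X0 ω - Yhat n ω|})
      atTop (nhds 0)) :
    ∀ ε > 0, Tendsto (fun t : ℝ =>
      P {ω | ε < |Real.exp (a * t) * X0 ω -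
        Real.exp (a * (t - (⌊t / τ⌋.toNat : ℝ) * τ)) * Yhat ⌊t / τ⌋.toNat ω|})
      atTop (nhds 0) := by
  simp only [Int.floor_toNat, ← Real.norm_eq_abs] at hconv ⊢
  refine tendsto_measure_lt_norm_of_norm_le_mul (N := fun t => ⌊t / τ⌋₊)
    (Real.exp_pos (|a| * τ)) hconv (tendsto_nat_floor_atTop.comp (tendsto_id.atTop_div_const hτ)) ?_
  filter_upwards [eventually_ge_atTop 0] with t ht ω
  obtain ⟨hlow, hhigh⟩ := natFloor_div_mul_le_and_lt_add ht hτ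
  simpa only [Real.norm_eq_abs] using abs_exp_mul_sub_exp_mul_le (a := a) (X0 ω) _ hlow hhigh.le

/-- Lemma 2: if the open-loop state `e^{a n τ} X(0)` can be estimated at the equally
spaced times `t_n = nτ` with error tending to zero in probability, then the estimate
propagated through the open-loop dynamics, `X̂(t) = e^{a(t - ⌊t/τ⌋τ)} Ŷ_{⌊t/τ⌋}`,
has error tending to zero in probability as `t → ∞` along the reals. -/
theorem estimation_along_sequence_implies_all_times
    {Ω : Type*} [MeasurableSpace Ω] (P : Measure Ω) [IsProbabilityMeasure P]
    (a τ : ℝ) (ha : 0 < a) (hτ : 0 < τ)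
    (X0 : Ω → ℝ) (Yhat : ℕ → Ω → ℝ)
    (hconv : ∀ ε > 0, Tendsto
      (fun n : ℕ => P {ω | ε < |Real.exp (a * (n * τ)) * X0 ω - Yhat n ω|})
      atTop (nhds 0)) :
    ∀ ε > 0, Tendsto (fun t : ℝ =>
      P {ω | ε < |Real.exp (a * t) * X0 ω -
        Real.exp (a * (t - (⌊t / τ⌋.toNat : ℝ) * τ)) * Yhat ⌊t / τ⌋.toNat ω|})
      atTop (nhds 0) :=
  estimation_along_sequence_implies_all_times_general P a τ hτ X0 Yhat hconv
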